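/- Let C be a graph pattern (the consequent of a rule), and let m and m* be mappings with dom(m) = dom(m*) such that m ≤_λ m* (for every variable ?v, m*(?v) = m(?v) or m*(?v) = :λ). Then every instance of the singleton schema whose graph pattern is unpack(m(C)) is also an instance of the singleton schema whose graph pattern is unpack(m*(C)); consequently, the schema obtained by extending a schema S with unpack(m(C)) has no instances beyond those of the schema obtained by extending S with both unpack(m(C)) and unpack(m*(C)), making the mapping m redundant with respect to m* (in the literal-free setting where no no-literal restrictions block the required instantiations). -/

import Mathlib

namespace Triplestore

/-- RDF constants: URIs, literals, and the special fresh constant `:λ`. -/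
inductive Const where
  | uri : String → Const
  | lit : String → Const
  | lambda : Const
deriving DecidableEq

/-- A triple of constants (subject, predicate, object). -/
abbrev Triple := Const × Const × Const

/-- Variables: named variables, plus a supply of fresh variables (indexed by a
triple and a position) used by the `unpack` operation. -/
inductive Var where
  | name : String → Var
  | fresh : Triple → Fin 3 → Var
deriving DecidableEq

/-- An element of a triple pattern: a constant or a variable. -/
inductive Term where
  | c : Const → Term
  | v : Var → Term
deriving DecidableEq

abbrev TriplePattern := Term × Term × Term
abbrev Pattern := Set TriplePattern
abbrev Graph := Set Triple
abbrev Mapping := Var → Const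

def isLit : Const → Prop := fun c => ∃ s, c = Const.lit s
def isUri : Const → Prop := fun c => ∃ s, c = Const.uri s

def Term.isLitTerm : Term → Prop
  | .c k => isLit k
  | .v _ => False

def applyTerm (m : Mapping) : Term → Const
  | .c k => k
  | .v x => m x

def applyTriple (m : Mapping) (t : TriplePattern) : Triple :=
  (applyTerm m t.1, applyTerm m t.2.1, applyTerm m t.2.2)

def applyPattern (m : Mapping) (A : Pattern) : Graph := applyTriple m '' A

/-- Positional access to the elements of a triple pattern. -/
def tpElem (t : TriplePattern) : Fin 3 → Term := ![t.1, t.2.1, t.2.2]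

/-- Positional access to the elements of a triple. -/
def trElem (t : Triple) : Fin 3 → Const := ![t.1, t.2.1, t.2.2]

def termVars : Term → Set Var
  | .c _ => (∅ : Set Var)
  | .v x => {x}

def tripleVars (t : TriplePattern) : Set Var :=
  termVars t.1 ∪ termVars t.2.1 ∪ termVars t.2.2

def patternVars (A : Pattern) : Set Var := ⋃ t ∈ A, tripleVars t

/-- No literal occurs in the pattern. -/
def literalFree (A : Pattern) : Prop := ∀ t ∈ A, ∀ i : Fin 3, ¬ (tpElem t i).isLitTerm

/-- The special constant `:λ` does not occur in the pattern. -/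
def lambdaFree (A : Pattern) : Prop := ∀ t ∈ A, ∀ i : Fin 3, tpElem t i ≠ Term.c Const.lambda

/-- Each variable occurs at most once in the pattern. -/
def varsOnce (A : Pattern) : Prop :=
  ∀ t₁, t₁ ∈ A → ∀ t₂, t₂ ∈ A → ∀ i j : Fin 3, ∀ x : Var,
    tpElem t₁ i = Term.v x → tpElem t₂ j = Term.v x → t₁ = t₂ ∧ i = j

/-- A triplestore schema `⟨S^G, S^Δ, S^∃⟩`: a graph pattern, a no-literal set of
variables and a set of existential constraints (the latter play no role in the
instance semantics used here). -/
structure Schema where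
  graph : Pattern
  noLit : Set Var
  exist : Set (Graph → Prop)

/-- Well-formedness conditions of a triplestore schema: `S^Δ ⊆ vars(S^G)`, each
variable occurs at most once in `S^G`, and the fresh constant `:λ` does not
occur in `S^G`. -/
def Schema.wellFormed (S : Schema) : Prop :=
  S.noLit ⊆ patternVars S.graph ∧ varsOnce S.graph ∧ lambdaFree S.graph

/-- `t` is obtained from the triple pattern `tp` by substituting its variables
with constants, where variables in the no-literal set `Δ` are substituted only
by non-literals. -/
def tripleInstOf (t : Triple) (tp : TriplePattern) (Δ : Set Var) : Prop :=
  ∃ γ : Mapping, applyTriple γ tp = t ∧ ∀ v ∈ Δ, ¬ isLit (γ v)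

/-- `I` is an instance of the schema `S`. -/
def instanceOf (I : Graph) (S : Schema) : Prop :=
  ∀ t ∈ I, ∃ tp ∈ S.graph, tripleInstOf t tp S.noLit

/-- `I(S)`: the set of instances of the schema `S`. -/
def instances (S : Schema) : Set Graph := {I | instanceOf I S}

/-- An inference rule `r : A → C`. -/
structure Rule where
  ante : Pattern
  cons : Pattern

/-- `⟦A⟧_G`: the set of mappings `m` with `m(A) ⊆ G`. -/
def evals (A : Pattern) (G : Graph) : Set Mapping := {m | applyPattern m A ⊆ G}

def constsOfPattern (A : Pattern) : Set Const :=
  {c | ∃ t ∈ A, ∃ i : Fin 3, tpElem t i = Term.c c}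

/-- The URIs occurring in the schema `S` or in the rule `r`. -/
def urisOf (S : Schema) (r : Rule) : Set Const :=
  {c | isUri c ∧
    c ∈ constsOfPattern S.graph ∪ constsOfPattern r.ante ∪ constsOfPattern r.cons}

/-- The critical instance `C(S,r)`: substitute each variable of `S^G`, in each
position, with every URI occurring in `S` or `r` and with `:λ`. -/
def criticalInstance (S : Schema) (r : Rule) : Graph :=
  {t | ∃ tp ∈ S.graph, ∃ γ : Mapping,
        applyTriple γ tp = t ∧ ∀ v : Var, γ v ∈ urisOf S r ∪ {Const.lambda}}

/-- The mapping sending every variable to `:λ`. -/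
def toLambda : Mapping := fun _ => Const.lambda

/-- The sandbox graph `S(S)`: substitute every variable of `S^G` with `:λ`. -/
def sandbox (S : Schema) : Graph := applyPattern toLambda S.graph

def rewriteTerm (a q : Term) : Prop := q = a ∨ q = Term.c Const.lambda

def rewriteTriple (ta tq : TriplePattern) : Prop :=
  rewriteTerm ta.1 tq.1 ∧ rewriteTerm ta.2.1 tq.2.1 ∧ rewriteTerm ta.2.2 tq.2.2

/-- `q ∈ Q(A)`: `q` is a rewriting of `A`, obtained by replacing any subset of
the elements of `A`'s triple patterns with `:λ`. -/
def isRewriting (A q : Pattern) : Prop :=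
  ∃ f : TriplePattern → TriplePattern,
    (∀ t ∈ A, rewriteTriple t (f t)) ∧ q = f '' A

/-- `⟦Q(A)⟧_G = ⋃_{q ∈ Q(A)} ⟦q⟧_G`. -/
def rewritingEvals (A : Pattern) (G : Graph) : Set Mapping :=
  {m | ∃ q : Pattern, isRewriting A q ∧ m ∈ evals q G}

/-- `unpack` of an element of a triple: replace `:λ` with a fresh variable
(one distinct fresh variable per occurrence). -/
def unpackElem (t : Triple) (i : Fin 3) : Term :=
  if trElem t i = Const.lambda then Term.v (Var.fresh t i) else Term.c (trElem t i)

def unpackTriple (t : Triple) : TriplePattern :=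
  (unpackElem t 0, unpackElem t 1, unpackElem t 2)

/-- `unpack`: replace each occurrence of `:λ` in a graph with a fresh variable. -/
def unpack (G : Graph) : Pattern := unpackTriple '' G

/-- The filtering function removes a mapping if a variable mapped to a literal
occurs in the subject or predicate position of a triple of `A`, or if in some
object position the mapped value is a literal `l` such that no triple pattern
of `S^G` matching the corresponding image triple has `l` or an unconstrained
variable in its object position. -/
def filteredOut (m : Mapping) (A : Pattern) (S : Schema) : Prop :=
  (∃ t ∈ A, ∃ x : Var, (t.1 = Term.v x ∨ t.2.1 = Term.v x) ∧ isLit (m x)) ∨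
  (∃ t ∈ A, isLit (applyTerm m t.2.2) ∧
     ¬ ∃ tp ∈ S.graph, (∃ γ : Mapping, applyTriple γ tp = applyTriple m t) ∧
        (tp.2.2 = Term.c (applyTerm m t.2.2) ∨
         ∃ x : Var, tp.2.2 = Term.v x ∧ x ∉ S.noLit))

/-- `Ω(M, A, S)`: the subset of the mappings of `M` not filtered out. -/
def omegaFilter (M : Set Mapping) (A : Pattern) (S : Schema) : Set Mapping :=
  {m ∈ M | ¬ filteredOut m A S}

/-- Post-processing shared by both approaches: extend the schema with
`unpack(m(C))`, and its (fresh) variables, for every mapping `m ∈ M`. -/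
def extendSchema (S : Schema) (M : Set Mapping) (C : Pattern) : Schema :=
  { graph := S.graph ∪ ⋃ m ∈ M, unpack (applyPattern m C)
    noLit := S.noLit ∪ ⋃ m ∈ M, patternVars (unpack (applyPattern m C))
    exist := S.exist }

/-- The `score` approach: use the mappings of the rewritings of `A` into the
sandbox graph, post-processed by the filtering function `Ω`. -/
def score (S : Schema) (r : Rule) : Schema :=
  extendSchema S (omegaFilter (rewritingEvals r.ante (sandbox S)) r.ante S) r.cons

/-- The critical-instance approach: use the mappings of `A` into the critical
instance, post-processed by the filtering function `Ω`. -/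
def critical (S : Schema) (r : Rule) : Schema :=
  extendSchema S (omegaFilter (evals r.ante (criticalInstance S r)) r.ante S) r.cons

/-- The triples derivable by one application of `r` to some instance of `S`. -/
def derivedTriples (S : Schema) (r : Rule) : Set Triple :=
  {t | ∃ I ∈ instances S, ∃ m : Mapping,
        applyPattern m r.ante ⊆ I ∧ t ∈ applyPattern m r.cons}

/-- `T` is a schema consequence `r(S)`: it extends `S`, the single-triple
instances of `T ∖ S` are exactly the triples derivable by one application of
`r` to an instance of `S`, and the instances of `T` are exactly the graphs
consisting of such derivable triples together with triples allowed by the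
original schema. -/
def isSchemaConsequence (S : Schema) (r : Rule) (T : Schema) : Prop :=
  S.graph ⊆ T.graph ∧ S.noLit ⊆ T.noLit ∧ T.exist = S.exist ∧
  (∀ t : Triple, t ∈ derivedTriples S r ↔
      instanceOf {t} ⟨T.graph \ S.graph, T.noLit, T.exist⟩) ∧
  (∀ I : Graph, instanceOf I T ↔
      ∀ t ∈ I, instanceOf {t} S ∨ t ∈ derivedTriples S r)

/-- `m ≤_λ m*`: the mapping `m*` is more general than `m`. -/
def moreGeneral (m mstar : Mapping) : Prop :=
  ∀ v : Var, mstar v = m v ∨ mstar v = Const.lambda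

/-- Instance of a bare graph pattern (no no-literal restrictions). -/
def instOfPattern (I : Graph) (G : Pattern) : Prop :=
  ∀ t ∈ I, ∃ tp ∈ G, ∃ γ : Mapping, applyTriple γ tp = t

lemma trElem_applyTriple (m : Mapping) (tp : TriplePattern) (i : Fin 3) :
    trElem (applyTriple m tp) i = applyTerm m (tpElem tp i) := by
  fin_cases i <;> rfl

lemma tpElem_unpackTriple (a : Triple) (i : Fin 3) :
    tpElem (unpackTriple a) i = unpackElem a i := by
  fin_cases i <;> rfl

lemma triple_ext_trElem {s t : Triple} (h : ∀ i, trElem s i = trElem t i) : s = t :=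
  Prod.ext (h 0) (Prod.ext (h 1) (h 2))

lemma applyTerm_unpackElem_of_ne_lambda (γ : Mapping) {a : Triple} {i : Fin 3}
    (h : trElem a i ≠ Const.lambda) : applyTerm γ (unpackElem a i) = trElem a i := by
  simp only [unpackElem, if_neg h, applyTerm]

def Triple.LambdaLE (a b : Triple) : Prop :=
  ∀ i, trElem b i = trElem a i ∨ trElem b i = Const.lambda

lemma lambdaLE_applyTriple_of_moreGeneral {m mstar : Mapping} (hgen : moreGeneral m mstar)
    (tp : TriplePattern) : (applyTriple m tp).LambdaLE (applyTriple mstar tp) := by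
  intro i
  rw [trElem_applyTriple, trElem_applyTriple]
  cases tpElem tp i with
  | c k => exact Or.inl rfl
  | v x => exact hgen x

/-- Every entry of `b` that is not `:λ` is fixed by both unpackings, and every `:λ` of `b`
becomes a fresh variable, which `γ'` sends to the corresponding entry of the target triple. -/
lemma exists_applyTriple_unpackTriple_eq {a b : Triple} (hab : a.LambdaLE b) (γ : Mapping) :
    ∃ γ', applyTriple γ' (unpackTriple b) = applyTriple γ (unpackTriple a) := by
  set t := applyTriple γ (unpackTriple a)
  refine ⟨fun | .fresh _ i => trElem t i | .name _ => Const.lambda, triple_ext_trElem ?_⟩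
  intro i
  rw [trElem_applyTriple, tpElem_unpackTriple]
  by_cases hb : trElem b i = Const.lambda
  · simp only [unpackElem, if_pos hb, applyTerm]
  · have hai : trElem a i = trElem b i := ((hab i).resolve_right hb).symm
    rw [applyTerm_unpackElem_of_ne_lambda _ hb, trElem_applyTriple, tpElem_unpackTriple,
      applyTerm_unpackElem_of_ne_lambda _ (hai ▸ hb), hai]

def groundTriples (G : Pattern) : Set Triple :=
  {t | ∃ tp ∈ G, ∃ γ : Mapping, applyTriple γ tp = t}

lemma instOfPattern_iff_subset_groundTriples (I : Graph) (G : Pattern) :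
    instOfPattern I G ↔ I ⊆ groundTriples G :=
  Iff.rfl

lemma groundTriples_mono {G H : Pattern} (h : G ⊆ H) : groundTriples G ⊆ groundTriples H :=
  fun _ ⟨tp, htp, hγ⟩ => ⟨tp, h htp, hγ⟩

lemma groundTriples_union (G H : Pattern) :
    groundTriples (G ∪ H) = groundTriples G ∪ groundTriples H := by
  ext t
  simp only [groundTriples, Set.mem_union, Set.mem_ofPred_eq, or_and_right, exists_or]

lemma groundTriples_unpack_subset {m mstar : Mapping} (hgen : moreGeneral m mstar)
    (C : Pattern) :
    groundTriples (unpack (applyPattern m C)) ⊆ groundTriples (unpack (applyPattern mstar C)) := by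
  rintro _ ⟨_, ⟨_, ⟨tp, htp, rfl⟩, rfl⟩, γ, rfl⟩
  obtain ⟨γ', hγ'⟩ :=
    exists_applyTriple_unpackTriple_eq (lambdaLE_applyTriple_of_moreGeneral hgen tp) γ
  exact ⟨_, ⟨_, ⟨tp, htp, rfl⟩, rfl⟩, γ', hγ'⟩

theorem redundancy_of_less_general_general (C : Pattern) (m mstar : Mapping)
    (hgen : moreGeneral m mstar) :
    (∀ I : Graph, instOfPattern I (unpack (applyPattern m C)) →
        instOfPattern I (unpack (applyPattern mstar C))) ∧
    (∀ (SG : Pattern) (I : Graph),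
        instOfPattern I (SG ∪ unpack (applyPattern m C)) →
        instOfPattern I (SG ∪ unpack (applyPattern m C) ∪ unpack (applyPattern mstar C))) ∧
    (∀ (SG : Pattern) (I : Graph),
        instOfPattern I (SG ∪ unpack (applyPattern m C) ∪ unpack (applyPattern mstar C)) ↔
        instOfPattern I (SG ∪ unpack (applyPattern mstar C))) := by
  have key := groundTriples_unpack_subset hgen C
  simp only [instOfPattern_iff_subset_groundTriples]
  refine ⟨fun I hI => hI.trans key,
    fun SG I hI => hI.trans (groundTriples_mono Set.subset_union_left), fun SG I => ?_⟩
  rw [groundTriples_union, groundTriples_union, Set.union_assoc, Set.union_eq_right.mpr key,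
    ← groundTriples_union]

/-- If `m ≤_λ m*`, then every instance of the singleton schema `unpack(m(C))`
is an instance of `unpack(m*(C))`; consequently extending a schema with
`unpack(m(C))` yields no instances beyond extending it with both patterns, and
`m` is redundant with respect to `m*` (literal-free setting). -/
theorem redundancy_of_less_general (C : Pattern) (m mstar : Mapping)
    (hlam : lambdaFree C) (hgen : moreGeneral m mstar) :
    (∀ I : Graph, instOfPattern I (unpack (applyPattern m C)) →
        instOfPattern I (unpack (applyPattern mstar C))) ∧
    (∀ (SG : Pattern) (I : Graph),
        instOfPattern I (SG ∪ unpack (applyPattern m C)) →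
        instOfPattern I (SG ∪ unpack (applyPattern m C) ∪ unpack (applyPattern mstar C))) ∧
    (∀ (SG : Pattern) (I : Graph),
        instOfPattern I (SG ∪ unpack (applyPattern m C) ∪ unpack (applyPattern mstar C)) ↔
        instOfPattern I (SG ∪ unpack (applyPattern mstar C))) :=
  redundancy_of_less_general_general C m mstar hgen

end Triplestore
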